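/- Let N ≥ 1, r, s, c ∈ (0,1) with r ≤ c + N/2, and α_s, α_r, α_c > 0. For every ρ > 0 there exists a constant C = C(ρ, N, r, s, c, α_r, α_c) > 0 such that for every λ > max{1, 2/ρ} and every φ ∈ C_c^∞(ℝ^N) with support contained in {x : |x| > ρ}, one has E_λ(φ) ≤ C ( ‖φ‖_{L²(ℝ^N)}² + ‖∇φ‖_{L²(ℝ^N)}² ). -/

import Mathlib

open MeasureTheory ENNReal

/-- The rescaled energy `E_λ` of the coupled nonlocal problem (ball of radius `1/λ` and its
complement). -/
noncomputable def rescaledEnergy (N : ℕ) (r s c αs αr αc lam : ℝ)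
    (φ : EuclideanSpace ℝ (Fin N) → ℝ) : ℝ≥0∞ :=
  ENNReal.ofReal (αs / 4 * lam ^ (2 * r - 2 * s)) *
      (∫⁻ x in {x : EuclideanSpace ℝ (Fin N) | ‖x‖ < 1 / lam},
        ∫⁻ y in {y : EuclideanSpace ℝ (Fin N) | ‖y‖ < 1 / lam},
          ENNReal.ofReal ((φ y - φ x) ^ 2 / ‖x - y‖ ^ ((N : ℝ) + 2 * s))) +
    ENNReal.ofReal (αr / 4) *
      (∫⁻ x in {x : EuclideanSpace ℝ (Fin N) | 1 / lam < ‖x‖},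
        ∫⁻ y in {y : EuclideanSpace ℝ (Fin N) | 1 / lam < ‖y‖},
          ENNReal.ofReal ((φ y - φ x) ^ 2 / ‖x - y‖ ^ ((N : ℝ) + 2 * r))) +
    ENNReal.ofReal (αc / 2 * lam ^ (2 * r - 2 * c)) *
      (∫⁻ x in {x : EuclideanSpace ℝ (Fin N) | ‖x‖ < 1 / lam},
        ∫⁻ y in {y : EuclideanSpace ℝ (Fin N) | 1 / lam < ‖y‖},
          ENNReal.ofReal ((φ y - φ x) ^ 2 / ‖x - y‖ ^ ((N : ℝ) + 2 * c)))


open Metric in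
lemma far_ne_top (N : ℕ) (hN : 1 ≤ N) {a : ℝ} (ha : (N : ℝ) < a) :
    ∫⁻ h : EuclideanSpace ℝ (Fin N) in (ball (0 : EuclideanSpace ℝ (Fin N)) 1)ᶜ,
      ENNReal.ofReal (‖h‖ ^ (-a)) ≠ ∞ := by
  have ha0 : 0 < a := lt_of_le_of_lt (Nat.cast_nonneg N) ha
  have hbd : ∀ h : EuclideanSpace ℝ (Fin N), h ∈ (ball (0 : EuclideanSpace ℝ (Fin N)) 1)ᶜ →
      ENNReal.ofReal (‖h‖ ^ (-a)) ≤ ENNReal.ofReal ((2 : ℝ) ^ a * (1 + ‖h‖) ^ (-a)) := by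
    intro h hh
    have h1 : (1 : ℝ) ≤ ‖h‖ := by
      simpa [mem_ball, dist_zero_right, not_lt] using hh
    have hpos : (0:ℝ) < ‖h‖ := lt_of_lt_of_le one_pos h1
    apply ENNReal.ofReal_le_ofReal
    have key : (1+‖h‖)^a ≤ (2:ℝ)^a * ‖h‖^a := by
      rw [← Real.mul_rpow (by norm_num) (norm_nonneg _)]
      exact Real.rpow_le_rpow (by positivity) (by linarith) ha0.le
    have h2 : ((2:ℝ)^a * ‖h‖^a)⁻¹ ≤ ((1+‖h‖)^a)⁻¹ :=
      inv_anti₀ (by positivity) key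
    rw [Real.rpow_neg hpos.le, Real.rpow_neg (by positivity)]
    calc (‖h‖^a)⁻¹ = (2:ℝ)^a * ((2:ℝ)^a*‖h‖^a)⁻¹ := by
          rw [mul_inv, ← mul_assoc, mul_inv_cancel₀ (by positivity), one_mul]
      _ ≤ (2:ℝ)^a * ((1+‖h‖)^a)⁻¹ := by gcongr
  refine ne_top_of_le_ne_top ?_ (le_trans (setLIntegral_mono' measurableSet_ball.compl hbd)
    (setLIntegral_le_lintegral _ _))
  have heq : ∫⁻ h : EuclideanSpace ℝ (Fin N), ENNReal.ofReal ((2 : ℝ) ^ a * (1 + ‖h‖) ^ (-a))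
      = ENNReal.ofReal ((2:ℝ)^a) * ∫⁻ h : EuclideanSpace ℝ (Fin N), ENNReal.ofReal ((1 + ‖h‖) ^ (-a)) := by
    simp_rw [ENNReal.ofReal_mul (by positivity : (0:ℝ) ≤ (2:ℝ)^a)]
    exact lintegral_const_mul' _ _ ofReal_ne_top
  rw [heq]
  apply ENNReal.mul_ne_top ofReal_ne_top
  exact (finite_integral_one_add_norm (E := EuclideanSpace ℝ (Fin N)) (μ := volume)
    (by simpa [finrank_euclideanSpace_fin] using ha)).ne

open Metric in
lemma pow_half_eq_rpow (m : ℕ) : ((1/2:ℝ))^m = (2:ℝ) ^ (-(m:ℝ)) := by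
  rw [Real.rpow_neg two_pos.le, Real.rpow_natCast, one_div, inv_pow]

open Metric in
lemma dyadic_real (N : ℕ) (a : ℝ) (k : ℕ) :
    ((1/2:ℝ)^(k+1)) ^ (-a) * (((1/2:ℝ)^k)^N) = (2:ℝ)^a * ((2:ℝ)^(a-(N:ℝ)))^k := by
  rw [pow_half_eq_rpow, ← pow_mul, pow_half_eq_rpow, ← Real.rpow_mul two_pos.le,
    ← Real.rpow_natCast ((2:ℝ)^(a-(N:ℝ))) k, ← Real.rpow_mul two_pos.le,
    ← Real.rpow_add two_pos, ← Real.rpow_add two_pos]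
  congr 1
  push_cast
  ring

open Metric in
lemma near_ne_top (N : ℕ) (hN : 1 ≤ N) {a : ℝ} (ha : a < N) :
    ∫⁻ h : EuclideanSpace ℝ (Fin N) in ball (0 : EuclideanSpace ℝ (Fin N)) 1,
      ENNReal.ofReal (‖h‖ ^ (-a)) ≠ ∞ := by
  haveI : Nontrivial (EuclideanSpace ℝ (Fin N)) := by
    refine Module.nontrivial_of_finrank_pos (R := ℝ) ?_
    simp only [finrank_euclideanSpace_fin]; omega
  rcases le_or_gt a 0 with h0 | h0
  · -- integrand bounded by 1
    refine ne_top_of_le_ne_top ?_ (setLIntegral_mono' measurableSet_ball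
      (fun h hh => ?_) : _ ≤ ∫⁻ _ in ball (0 : EuclideanSpace ℝ (Fin N)) 1, (1:ℝ≥0∞))
    · simp only [setLIntegral_one]
      exact measure_ball_lt_top.ne
    · have h1 : ‖h‖ ≤ 1 := le_of_lt (by simpa [mem_ball, dist_zero_right] using hh)
      calc ENNReal.ofReal (‖h‖ ^ (-a)) ≤ ENNReal.ofReal 1 :=
            ENNReal.ofReal_le_ofReal (Real.rpow_le_one (norm_nonneg _) h1 (by linarith))
        _ = 1 := ENNReal.ofReal_one
  · set E := EuclideanSpace ℝ (Fin N)
    set S : ℕ → Set E := fun k => {h : E | (1/2:ℝ)^(k+1) ≤ ‖h‖} ∩ ball (0:E) ((1/2:ℝ)^k) with hS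
    have hmeas : ∀ k, MeasurableSet (S k) := fun k =>
      (measurableSet_le measurable_const measurable_norm).inter measurableSet_ball
    have cover : ball (0:E) 1 ⊆ {(0:E)} ∪ ⋃ k, S k := by
      intro h hh
      rcases eq_or_ne h 0 with rfl | hne
      · exact Set.mem_union_left _ rfl
      · have hpos : 0 < ‖h‖ := norm_pos_iff.2 hne
        have hex : ∃ n : ℕ, (1/2:ℝ)^(n+1) ≤ ‖h‖ := by
          obtain ⟨n, hn⟩ := exists_pow_lt_of_lt_one hpos (by norm_num : (1/2:ℝ) < 1)
          exact ⟨n, le_of_lt (lt_of_le_of_lt (pow_le_pow_of_le_one (by norm_num) (by norm_num)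
            (Nat.le_succ n)) hn)⟩
        refine Set.mem_union_right _ (Set.mem_iUnion.2 ⟨Nat.find hex, Nat.find_spec hex, ?_⟩)
        rw [mem_ball, dist_zero_right]
        rcases Nat.eq_zero_or_pos (Nat.find hex) with hk | hk
        · rw [hk, pow_zero]
          simpa [mem_ball, dist_zero_right] using hh
        · obtain ⟨j, hj⟩ := Nat.exists_eq_succ_of_ne_zero hk.ne'
          have := Nat.find_min hex (m := j) (by omega)
          rw [hj]
          exact lt_of_not_ge this
    have key : ∀ k, ∫⁻ h : E in S k, ENNReal.ofReal (‖h‖ ^ (-a)) ≤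
        ENNReal.ofReal ((2:ℝ)^a) * ENNReal.ofReal ((2:ℝ)^(a-(N:ℝ)))^k * volume (ball (0:E) 1) := by
      intro k
      have hle : ∫⁻ h : E in S k, ENNReal.ofReal (‖h‖ ^ (-a)) ≤
          ∫⁻ _ in S k, ENNReal.ofReal (((1/2:ℝ)^(k+1)) ^ (-a)) := by
        refine setLIntegral_mono' (hmeas k) (fun h hh => ENNReal.ofReal_le_ofReal ?_)
        exact Real.rpow_le_rpow_of_nonpos (by positivity) hh.1 (by linarith)
      refine hle.trans ?_
      rw [setLIntegral_const]
      have hball : volume (S k) ≤ volume (ball (0:E) ((1/2:ℝ)^k)) :=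
        measure_mono Set.inter_subset_right
      have hb : volume (ball (0:E) ((1/2:ℝ)^k)) =
          ENNReal.ofReal (((1/2:ℝ)^k)^N) * volume (ball (0:E) 1) := by
        rw [Measure.addHaar_ball volume (0:E) (by positivity : (0:ℝ) ≤ (1/2:ℝ)^k)]
        have hfr : Module.finrank ℝ E = N := finrank_euclideanSpace_fin
        rw [hfr]
      calc ENNReal.ofReal (((1/2:ℝ)^(k+1)) ^ (-a)) * volume (S k)
          ≤ ENNReal.ofReal (((1/2:ℝ)^(k+1)) ^ (-a)) *
            (ENNReal.ofReal (((1/2:ℝ)^k)^N) * volume (ball (0:E) 1)) := by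
            rw [← hb]; exact mul_le_mul_right hball _
        _ = ENNReal.ofReal (((1/2:ℝ)^(k+1)) ^ (-a) * ((1/2:ℝ)^k)^N) * volume (ball (0:E) 1) := by
            rw [← mul_assoc, ← ENNReal.ofReal_mul (by positivity)]
        _ = ENNReal.ofReal ((2:ℝ)^a * ((2:ℝ)^(a-(N:ℝ)))^k) * volume (ball (0:E) 1) := by
            rw [dyadic_real]
        _ = ENNReal.ofReal ((2:ℝ)^a) * ENNReal.ofReal ((2:ℝ)^(a-(N:ℝ)))^k * volume (ball (0:E) 1) := by
            rw [ENNReal.ofReal_mul (by positivity), ENNReal.ofReal_pow (by positivity)]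
    have hq : ENNReal.ofReal ((2:ℝ)^(a-(N:ℝ))) < 1 := by
      rw [← ENNReal.ofReal_one]
      exact ENNReal.ofReal_lt_ofReal_iff_of_nonneg (by positivity) |>.2
        (Real.rpow_lt_one_of_one_lt_of_neg one_lt_two (by
          have : (0:ℝ) < N := by exact_mod_cast hN
          linarith))
    set q := ENNReal.ofReal ((2:ℝ)^(a-(N:ℝ)))
    refine ne_top_of_le_ne_top ?_
      (calc ∫⁻ h : E in ball (0:E) 1, ENNReal.ofReal (‖h‖ ^ (-a))
        ≤ ∫⁻ h : E in {(0:E)} ∪ ⋃ k, S k, ENNReal.ofReal (‖h‖ ^ (-a)) :=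
          lintegral_mono_set cover
      _ ≤ (∫⁻ h : E in {(0:E)}, ENNReal.ofReal (‖h‖ ^ (-a))) +
          ∫⁻ h : E in ⋃ k, S k, ENNReal.ofReal (‖h‖ ^ (-a)) := lintegral_union_le _ _ _
      _ ≤ 0 + ∑' k, ∫⁻ h : E in S k, ENNReal.ofReal (‖h‖ ^ (-a)) := by
          gcongr
          · exact le_of_eq (setLIntegral_measure_zero _ _ (measure_singleton 0))
          · exact lintegral_iUnion_le _ _
      _ ≤ 0 + ∑' k, ENNReal.ofReal ((2:ℝ)^a) * q^k * volume (ball (0:E) 1) := by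
          gcongr with k
          exact key k
      _ = ENNReal.ofReal ((2:ℝ)^a) * volume (ball (0:E) 1) * ∑' k, q^k := by
          rw [zero_add]
          rw [← ENNReal.tsum_mul_left]
          congr 1 with k
          ring)
    apply ENNReal.mul_ne_top
    · exact ENNReal.mul_ne_top ofReal_ne_top measure_ball_lt_top.ne
    · rw [ENNReal.tsum_geometric]
      exact ENNReal.inv_ne_top.2 (tsub_pos_of_lt hq).ne'

open Metric in
lemma ftc_sq {N : ℕ} (φ : EuclideanSpace ℝ (Fin N) → ℝ) (hφ : ContDiff ℝ (⊤ : ℕ∞) φ)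
    (x h : EuclideanSpace ℝ (Fin N)) :
    ENNReal.ofReal ((φ (x + h) - φ x)^2) ≤ ENNReal.ofReal (‖h‖^2) *
      ∫⁻ t in Set.Icc (0:ℝ) 1, ENNReal.ofReal (‖fderiv ℝ φ (x + t • h)‖^2) := by
  -- derivative of t ↦ φ (x + t • h)
  have hd : ∀ t : ℝ, HasDerivAt (fun u : ℝ => φ (x + u • h)) ((fderiv ℝ φ (x + t • h)) h) t := by
    intro t
    have h1 : HasFDerivAt φ (fderiv ℝ φ (x + t • h)) (x + t • h) :=
      (hφ.differentiable (by simp) (x + t • h)).hasFDerivAt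
    have h2 : HasDerivAt (fun u : ℝ => x + u • h) h t := by
      simpa using ((hasDerivAt_id t).smul_const h).const_add x
    exact h1.comp_hasDerivAt t h2
  have hcont : Continuous fun t : ℝ => (fderiv ℝ φ (x + t • h)) h := by
    have hf : Continuous (fderiv ℝ φ) := hφ.continuous_fderiv (by simp)
    exact (hf.comp (by continuity)).clm_apply continuous_const
  have hgcont : Continuous fun t : ℝ => ‖fderiv ℝ φ (x + t • h)‖ := by
    have hf : Continuous (fderiv ℝ φ) := hφ.continuous_fderiv (by simp)
    exact (hf.comp (by continuity)).norm
  have key : φ (x + h) - φ x = ∫ t in (0:ℝ)..1, (fderiv ℝ φ (x + t • h)) h := by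
    rw [intervalIntegral.integral_eq_sub_of_hasDerivAt (fun t _ => hd t)
      (hcont.intervalIntegrable 0 1)]
    simp
  set g : ℝ → ℝ := fun t => ‖fderiv ℝ φ (x + t • h)‖ with hg
  have habs : |φ (x + h) - φ x| ≤ (∫ t in (0:ℝ)..1, g t) * ‖h‖ := by
    rw [key]
    calc |∫ t in (0:ℝ)..1, (fderiv ℝ φ (x + t • h)) h|
        ≤ ∫ t in (0:ℝ)..1, |(fderiv ℝ φ (x + t • h)) h| :=
          intervalIntegral.abs_integral_le_integral_abs zero_le_one
      _ ≤ ∫ t in (0:ℝ)..1, g t * ‖h‖ := by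
          apply intervalIntegral.integral_mono_on zero_le_one
            (hcont.abs.intervalIntegrable 0 1)
            ((hgcont.mul continuous_const).intervalIntegrable 0 1)
          intro t _
          exact (fderiv ℝ φ (x + t • h)).le_opNorm h
      _ = (∫ t in (0:ℝ)..1, g t) * ‖h‖ := by
          rw [← intervalIntegral.integral_mul_const]
  have hIg : 0 ≤ ∫ t in (0:ℝ)..1, g t :=
    intervalIntegral.integral_nonneg zero_le_one (fun t _ => norm_nonneg _)
  have hsq : (φ (x + h) - φ x)^2 ≤ ((∫ t in (0:ℝ)..1, g t) * ‖h‖)^2 := by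
    rw [← sq_abs]
    exact pow_le_pow_left₀ (abs_nonneg _) habs 2
  -- Cauchy-Schwarz step
  set I := ∫ t in (0:ℝ)..1, g t with hI
  have hint : IntegrableOn g (Set.Ioc (0:ℝ) 1) := hgcont.integrableOn_Ioc
  have hIoc : I = ∫ t in Set.Ioc (0:ℝ) 1, g t := intervalIntegral.integral_of_le zero_le_one
  have hofI : ENNReal.ofReal I = ∫⁻ t in Set.Ioc (0:ℝ) 1, ENNReal.ofReal (g t) := by
    rw [hIoc]
    exact ofReal_integral_eq_lintegral_ofReal hint
      (Filter.Eventually.of_forall fun t => norm_nonneg _)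
  have hCS : ENNReal.ofReal I ≤
      (∫⁻ t in Set.Ioc (0:ℝ) 1, ENNReal.ofReal (g t) ^ (2:ℝ)) ^ (1/2:ℝ) := by
    rw [hofI]
    have hpq : Real.HolderConjugate 2 2 := ⟨by norm_num, by norm_num, by norm_num⟩
    have := ENNReal.lintegral_mul_le_Lp_mul_Lq (volume.restrict (Set.Ioc (0:ℝ) 1)) hpq
      (f := fun t => ENNReal.ofReal (g t)) (g := fun _ => 1)
      (hgcont.measurable.ennreal_ofReal.aemeasurable) aemeasurable_const
    simp only [mul_one, ENNReal.one_rpow] at this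
    calc ∫⁻ t in Set.Ioc (0:ℝ) 1, ENNReal.ofReal (g t)
        ≤ (∫⁻ t in Set.Ioc (0:ℝ) 1, ENNReal.ofReal (g t) ^ (2:ℝ)) ^ (1/2:ℝ) *
          (∫⁻ _ in Set.Ioc (0:ℝ) 1, (1:ℝ≥0∞)) ^ (1/2:ℝ) := by simpa using this
      _ = (∫⁻ t in Set.Ioc (0:ℝ) 1, ENNReal.ofReal (g t) ^ (2:ℝ)) ^ (1/2:ℝ) := by
          rw [setLIntegral_one, Real.volume_Ioc]
          norm_num
  have hsq2 : (ENNReal.ofReal I) ^ 2 ≤ ∫⁻ t in Set.Ioc (0:ℝ) 1, ENNReal.ofReal (g t) ^ (2:ℝ) := by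
    calc (ENNReal.ofReal I) ^ 2 = ENNReal.ofReal I * ENNReal.ofReal I := sq (ENNReal.ofReal I) ▸ by
          rw [pow_two]
      _ ≤ ((∫⁻ t in Set.Ioc (0:ℝ) 1, ENNReal.ofReal (g t) ^ (2:ℝ)) ^ (1/2:ℝ)) *
          ((∫⁻ t in Set.Ioc (0:ℝ) 1, ENNReal.ofReal (g t) ^ (2:ℝ)) ^ (1/2:ℝ)) :=
          mul_le_mul' hCS hCS
      _ = ∫⁻ t in Set.Ioc (0:ℝ) 1, ENNReal.ofReal (g t) ^ (2:ℝ) := by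
          rw [← ENNReal.rpow_add_of_nonneg _ _ (by norm_num) (by norm_num)]
          norm_num
  have hrw : ∀ t : ℝ, ENNReal.ofReal (g t) ^ (2:ℝ) = ENNReal.ofReal (g t ^ 2) := by
    intro t
    rw [ENNReal.ofReal_rpow_of_nonneg (norm_nonneg _) (by norm_num : (0:ℝ) ≤ 2)]
    rw [Real.rpow_two]
  calc ENNReal.ofReal ((φ (x + h) - φ x)^2)
      ≤ ENNReal.ofReal ((I * ‖h‖)^2) := ENNReal.ofReal_le_ofReal hsq
    _ = ENNReal.ofReal (‖h‖^2) * (ENNReal.ofReal I)^2 := by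
        rw [mul_pow, ENNReal.ofReal_mul (by positivity), ENNReal.ofReal_pow hIg, mul_comm]
    _ ≤ ENNReal.ofReal (‖h‖^2) * ∫⁻ t in Set.Icc (0:ℝ) 1, ENNReal.ofReal (g t ^ 2) := by
        apply mul_le_mul_right
        refine hsq2.trans ?_
        simp_rw [hrw]
        exact lintegral_mono_set Set.Ioc_subset_Icc_self
    _ = ENNReal.ofReal (‖h‖^2) * ∫⁻ t in Set.Icc (0:ℝ) 1,
        ENNReal.ofReal (‖fderiv ℝ φ (x + t • h)‖^2) := rfl

set_option maxHeartbeats 1000000 in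
open Metric in
lemma gagliardo (N : ℕ) (hN : 1 ≤ N) {p : ℝ} (hpN : (N:ℝ) < p) (hp2 : p < (N:ℝ) + 2) :
    ∃ C : ℝ, 0 < C ∧ ∀ φ : EuclideanSpace ℝ (Fin N) → ℝ, ContDiff ℝ (⊤ : ℕ∞) φ → HasCompactSupport φ →
    (∫⁻ x, ∫⁻ y, ENNReal.ofReal ((φ y - φ x)^2 / ‖x - y‖ ^ p)) ≤
      ENNReal.ofReal (C * ((∫ x, φ x ^ 2) + ∫ x, ‖fderiv ℝ φ x‖^2)) := by
  classical
  set E := EuclideanSpace ℝ (Fin N)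
  have hp0 : 0 < p := lt_of_le_of_lt (Nat.cast_nonneg N) hpN
  set J1 : ℝ≥0∞ := ∫⁻ h : E in ball (0:E) 1, ENNReal.ofReal (‖h‖ ^ (2-p)) with hJ1def
  set J2 : ℝ≥0∞ := ∫⁻ h : E in (ball (0:E) 1)ᶜ, ENNReal.ofReal (‖h‖ ^ (-p)) with hJ2def
  have hJ1 : J1 ≠ ∞ := by
    have : J1 = ∫⁻ h : E in ball (0:E) 1, ENNReal.ofReal (‖h‖ ^ (-(p-2))) := by
      rw [hJ1def]; congr 1 with h; rw [neg_sub]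
    rw [this]
    exact near_ne_top N hN (by linarith)
  have hJ2 : J2 ≠ ∞ := far_ne_top N hN hpN
  refine ⟨J1.toReal + 4 * J2.toReal + 1, by positivity, fun φ hφ hsupp => ?_⟩
  set A := ∫ x : E, φ x ^ 2 with hA
  set B := ∫ x : E, ‖fderiv ℝ φ x‖ ^ 2 with hB
  have hA0 : 0 ≤ A := integral_nonneg fun x => sq_nonneg _
  have hB0 : 0 ≤ B := integral_nonneg fun x => sq_nonneg _
  have hφc : Continuous φ := hφ.continuous
  have hfc : Continuous (fderiv ℝ φ) := hφ.continuous_fderiv (by simp)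
  have hAint : Integrable (fun x : E => φ x ^ 2) :=
    by have := hsupp.comp_left (g := fun t : ℝ => t ^ 2) (by simp)
       exact (hφc.pow 2).integrable_of_hasCompactSupport this
  have hBint : Integrable (fun x : E => ‖fderiv ℝ φ x‖ ^ 2) :=
    by have := (hsupp.fderiv (𝕜 := ℝ)).comp_left (g := fun v : E →L[ℝ] ℝ => ‖v‖ ^ 2) (by simp)
       exact (hfc.norm.pow 2).integrable_of_hasCompactSupport this
  have hLA : (∫⁻ x : E, ENNReal.ofReal (φ x ^ 2)) = ENNReal.ofReal A :=
    (ofReal_integral_eq_lintegral_ofReal hAint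
      (Filter.Eventually.of_forall fun x => sq_nonneg _)).symm
  have hLB : (∫⁻ x : E, ENNReal.ofReal (‖fderiv ℝ φ x‖ ^ 2)) = ENNReal.ofReal B :=
    (ofReal_integral_eq_lintegral_ofReal hBint
      (Filter.Eventually.of_forall fun x => sq_nonneg _)).symm
  set D : E → E → ℝ≥0∞ := fun x h => ENNReal.ofReal ((φ (x + h) - φ x)^2 / ‖h‖ ^ p) with hD
  have hDmeas : Measurable (Function.uncurry D) := by
    apply Measurable.ennreal_ofReal
    apply Measurable.div
    · exact ((hφc.comp (continuous_fst.add continuous_snd)).sub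
        (hφc.comp continuous_fst)).pow 2 |>.measurable
    · exact ((Real.continuous_rpow_const hp0.le).comp continuous_snd.norm).measurable
  -- step 1: translate inner integral
  have step1 : (∫⁻ x : E, ∫⁻ y : E, ENNReal.ofReal ((φ y - φ x)^2 / ‖x - y‖ ^ p)) =
      ∫⁻ x : E, ∫⁻ h : E, D x h := by
    refine lintegral_congr fun x => ?_
    rw [← lintegral_add_left_eq_self
      (fun y => ENNReal.ofReal ((φ y - φ x)^2 / ‖x - y‖ ^ p)) x]
    refine lintegral_congr fun h => ?_
    have : x - (x + h) = -h := by abel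
    rw [hD]
    simp only [this, norm_neg]
  -- step 2: swap
  have step2 : (∫⁻ x : E, ∫⁻ h : E, D x h) = ∫⁻ h : E, ∫⁻ x : E, D x h :=
    lintegral_lintegral_swap hDmeas.aemeasurable
  -- near bound
  have hnear : ∀ h : E, (∫⁻ x : E, D x h) ≤ ENNReal.ofReal (‖h‖ ^ (2-p)) * ENNReal.ofReal B := by
    intro h
    rcases eq_or_ne h 0 with rfl | hne
    · have : ∀ x : E, D x 0 = 0 := fun x => by simp [hD]
      simp only [this, lintegral_zero]
      exact zero_le
    · have hpos : (0:ℝ) < ‖h‖ := norm_pos_iff.2 hne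
      have hDle : ∀ x : E, D x h ≤ ENNReal.ofReal (‖h‖ ^ (2-p)) *
          ∫⁻ t in Set.Icc (0:ℝ) 1, ENNReal.ofReal (‖fderiv ℝ φ (x + t • h)‖^2) := by
        intro x
        have hsplit : D x h = ENNReal.ofReal ((φ (x + h) - φ x)^2) *
            ENNReal.ofReal ((‖h‖ ^ p)⁻¹) := by
          simp only [hD]
          rw [div_eq_mul_inv, ENNReal.ofReal_mul (sq_nonneg _)]
        have hexp : ‖h‖^2 * (‖h‖ ^ p)⁻¹ = ‖h‖ ^ (2-p) := by
          rw [← Real.rpow_natCast ‖h‖ 2, ← Real.rpow_neg hpos.le,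
            ← Real.rpow_add hpos]
          norm_num [sub_eq_add_neg]
        calc D x h ≤ (ENNReal.ofReal (‖h‖^2) *
              ∫⁻ t in Set.Icc (0:ℝ) 1, ENNReal.ofReal (‖fderiv ℝ φ (x + t • h)‖^2)) *
              ENNReal.ofReal ((‖h‖ ^ p)⁻¹) := by
              rw [hsplit]
              exact mul_le_mul_left (ftc_sq φ hφ x h) _
          _ = ENNReal.ofReal (‖h‖ ^ (2-p)) *
              ∫⁻ t in Set.Icc (0:ℝ) 1, ENNReal.ofReal (‖fderiv ℝ φ (x + t • h)‖^2) := by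
              rw [mul_right_comm, ← ENNReal.ofReal_mul (by positivity), hexp]
      calc (∫⁻ x : E, D x h) ≤ ∫⁻ x : E, ENNReal.ofReal (‖h‖ ^ (2-p)) *
            ∫⁻ t in Set.Icc (0:ℝ) 1, ENNReal.ofReal (‖fderiv ℝ φ (x + t • h)‖^2) :=
            lintegral_mono hDle
        _ = ENNReal.ofReal (‖h‖ ^ (2-p)) * ∫⁻ x : E,
            ∫⁻ t in Set.Icc (0:ℝ) 1, ENNReal.ofReal (‖fderiv ℝ φ (x + t • h)‖^2) :=
            lintegral_const_mul' _ _ ofReal_ne_top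
        _ = ENNReal.ofReal (‖h‖ ^ (2-p)) * ENNReal.ofReal B := by
            congr 1
            have hswap : (∫⁻ x : E, ∫⁻ t in Set.Icc (0:ℝ) 1,
                ENNReal.ofReal (‖fderiv ℝ φ (x + t • h)‖^2)) =
                ∫⁻ t in Set.Icc (0:ℝ) 1, ∫⁻ x : E,
                ENNReal.ofReal (‖fderiv ℝ φ (x + t • h)‖^2) := by
              apply lintegral_lintegral_swap
              apply Measurable.aemeasurable
              apply Measurable.ennreal_ofReal
              exact (((hfc.comp (continuous_fst.add
                (continuous_snd.smul continuous_const))).norm).pow 2).measurable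
            rw [hswap]
            have hinner : ∀ t : ℝ, (∫⁻ x : E,
                ENNReal.ofReal (‖fderiv ℝ φ (x + t • h)‖^2)) = ENNReal.ofReal B := by
              intro t
              rw [lintegral_add_right_eq_self
                (fun x => ENNReal.ofReal (‖fderiv ℝ φ x‖^2)) (t • h)]
              exact hLB
            simp only [hinner]
            rw [setLIntegral_const, Real.volume_Icc]
            norm_num
  -- far bound
  have hfar : ∀ h ∈ (ball (0:E) 1)ᶜ, (∫⁻ x : E, D x h) ≤
      ENNReal.ofReal (‖h‖ ^ (-p)) * (4 * ENNReal.ofReal A) := by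
    intro h hh
    have h1 : (1:ℝ) ≤ ‖h‖ := by simpa [mem_ball, dist_zero_right, not_lt] using hh
    have hpos : (0:ℝ) < ‖h‖ := lt_of_lt_of_le one_pos h1
    have hDle : ∀ x : E, D x h ≤ ENNReal.ofReal (‖h‖ ^ (-p)) *
        ENNReal.ofReal (2 * φ (x + h)^2 + 2 * φ x ^ 2) := by
      intro x
      simp only [hD]
      rw [div_eq_mul_inv, ← Real.rpow_neg hpos.le, mul_comm,
        ENNReal.ofReal_mul (by positivity)]
      apply mul_le_mul_right
      apply ENNReal.ofReal_le_ofReal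
      nlinarith [sq_nonneg (φ (x + h) + φ x)]
    calc (∫⁻ x : E, D x h)
        ≤ ∫⁻ x : E, ENNReal.ofReal (‖h‖ ^ (-p)) *
          ENNReal.ofReal (2 * φ (x + h)^2 + 2 * φ x ^ 2) := lintegral_mono hDle
      _ = ENNReal.ofReal (‖h‖ ^ (-p)) *
          ∫⁻ x : E, ENNReal.ofReal (2 * φ (x + h)^2 + 2 * φ x ^ 2) :=
          lintegral_const_mul' _ _ ofReal_ne_top
      _ ≤ ENNReal.ofReal (‖h‖ ^ (-p)) * (4 * ENNReal.ofReal A) := by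
          apply mul_le_mul_right
          calc (∫⁻ x : E, ENNReal.ofReal (2 * φ (x + h)^2 + 2 * φ x ^ 2))
              ≤ ∫⁻ x : E, (ENNReal.ofReal (2 * φ (x + h)^2) +
                ENNReal.ofReal (2 * φ x ^ 2)) :=
                lintegral_mono fun x => ENNReal.ofReal_add_le
            _ = (∫⁻ x : E, ENNReal.ofReal (2 * φ (x + h)^2)) +
                ∫⁻ x : E, ENNReal.ofReal (2 * φ x ^ 2) := by
                apply lintegral_add_left
                exact (continuous_const.mul
                  ((hφc.comp (continuous_id.add continuous_const)).pow 2)).measurable.ennreal_ofReal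
            _ = 4 * ENNReal.ofReal A := by
                have c2 : ∀ t : ℝ, ENNReal.ofReal (2 * t) = 2 * ENNReal.ofReal t := by
                  intro t
                  rw [ENNReal.ofReal_mul (by norm_num)]
                  norm_num
                simp only [c2]
                rw [lintegral_const_mul' _ _ (by norm_num), lintegral_const_mul' _ _ (by norm_num),
                  lintegral_add_right_eq_self (fun x => ENNReal.ofReal (φ x ^ 2)) h, hLA]
                ring
  -- assemble
  rw [step1, step2, ← lintegral_add_compl (fun h => ∫⁻ x : E, D x h) measurableSet_ball]
  calc (∫⁻ h : E in ball (0:E) 1, ∫⁻ x : E, D x h) +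
        ∫⁻ h : E in (ball (0:E) 1)ᶜ, ∫⁻ x : E, D x h
      ≤ (∫⁻ h : E in ball (0:E) 1, ENNReal.ofReal (‖h‖ ^ (2-p)) * ENNReal.ofReal B) +
        ∫⁻ h : E in (ball (0:E) 1)ᶜ, ENNReal.ofReal (‖h‖ ^ (-p)) * (4 * ENNReal.ofReal A) :=
        add_le_add (setLIntegral_mono' measurableSet_ball fun h _ => hnear h)
          (setLIntegral_mono' measurableSet_ball.compl fun h hh => hfar h hh)
    _ = J1 * ENNReal.ofReal B + J2 * (4 * ENNReal.ofReal A) := by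
        rw [lintegral_mul_const' _ _ ofReal_ne_top,
          lintegral_mul_const' _ _ (by
            exact ENNReal.mul_ne_top (by norm_num) ofReal_ne_top)]
    _ ≤ ENNReal.ofReal ((J1.toReal + 4 * J2.toReal + 1) * (A + B)) := by
        have e1 : J1 * ENNReal.ofReal B = ENNReal.ofReal (J1.toReal * B) := by
          rw [ENNReal.ofReal_mul ENNReal.toReal_nonneg, ENNReal.ofReal_toReal hJ1]
        have e2 : J2 * (4 * ENNReal.ofReal A) = ENNReal.ofReal (J2.toReal * (4 * A)) := by
          rw [ENNReal.ofReal_mul ENNReal.toReal_nonneg, ENNReal.ofReal_toReal hJ2,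
            ← ENNReal.ofReal_ofNat 4, ← ENNReal.ofReal_mul (by norm_num)]
        rw [e1, e2]
        calc ENNReal.ofReal (J1.toReal * B) + ENNReal.ofReal (J2.toReal * (4 * A))
            = ENNReal.ofReal (J1.toReal * B + J2.toReal * (4 * A)) := by
              rw [← ENNReal.ofReal_add (by positivity) (by positivity)]
          _ ≤ ENNReal.ofReal ((J1.toReal + 4 * J2.toReal + 1) * (A + B)) := by
              apply ENNReal.ofReal_le_ofReal
              have h1 : (0:ℝ) ≤ J1.toReal := ENNReal.toReal_nonneg
              have h2 : (0:ℝ) ≤ J2.toReal := ENNReal.toReal_nonneg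
              nlinarith

set_option maxHeartbeats 1000000 in
open Metric in
/-- For test functions supported away from the origin, the rescaled energy `E_λ` is
controlled by the squared `H¹` norm, uniformly for `λ > max{1, 2/ρ}`. -/
theorem rescaled_energy_H1_bound (N : ℕ) (hN : 1 ≤ N) (r s c : ℝ)
    (hr : r ∈ Set.Ioo (0 : ℝ) 1) (hs : s ∈ Set.Ioo (0 : ℝ) 1) (hc : c ∈ Set.Ioo (0 : ℝ) 1)
    (hrc : r ≤ c + (N : ℝ) / 2)
    (αs αr αc : ℝ) (hαs : 0 < αs) (hαr : 0 < αr) (hαc : 0 < αc) :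
    ∀ ρ : ℝ, 0 < ρ → ∃ C : ℝ, 0 < C ∧
      ∀ lam : ℝ, max 1 (2 / ρ) < lam →
      ∀ φ : EuclideanSpace ℝ (Fin N) → ℝ, ContDiff ℝ (⊤ : ℕ∞) φ → HasCompactSupport φ →
      Function.support φ ⊆ {x : EuclideanSpace ℝ (Fin N) | ρ < ‖x‖} →
      rescaledEnergy N r s c αs αr αc lam φ ≤
        ENNReal.ofReal (C * ((∫ x, (φ x) ^ 2) + ∫ x, ‖fderiv ℝ φ x‖ ^ 2)) := by
  intro ρ hρ
  set E := EuclideanSpace ℝ (Fin N)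
  haveI : Nontrivial E := by
    have hfr : Module.finrank ℝ E = N := finrank_euclideanSpace_fin
    refine Module.nontrivial_of_finrank_pos (R := ℝ) (M := E) ?_
    rw [hfr]
    exact hN
  obtain ⟨C2, hC2, hG⟩ := gagliardo N hN (p := (N:ℝ) + 2*r)
    (by linarith [hr.1]) (by linarith [hr.2])
  set q : ℝ := (N:ℝ) + 2*c with hqdef
  have hq0 : 0 < q := by
    have : (0:ℝ) ≤ N := Nat.cast_nonneg N
    simp only [hqdef]; linarith [hc.1]
  set μB : ℝ := (volume (ball (0:E) 1)).toReal with hμB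
  have hμB0 : 0 ≤ μB := ENNReal.toReal_nonneg
  refine ⟨αr/4 * C2 + αc/2 * (2/ρ)^q * μB + 1, by positivity, ?_⟩
  intro lam hlam φ hφ hsupp hsuppset
  have hlam1 : 1 < lam := lt_of_le_of_lt (le_max_left _ _) hlam
  have hlam0 : 0 < lam := lt_trans one_pos hlam1
  have hlamρ : 2/ρ < lam := lt_of_le_of_lt (le_max_right _ _) hlam
  have hinv : 1/lam < ρ/2 := by
    rw [div_lt_div_iff₀ hlam0 two_pos]
    have := (div_lt_iff₀ hρ).1 hlamρ
    nlinarith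
  have hφzero : ∀ x : E, ‖x‖ ≤ ρ → φ x = 0 := by
    intro x hx
    by_contra hne
    exact absurd (hsuppset (Function.mem_support.2 hne)) (by simpa using hx)
  have hzball : ∀ x : E, ‖x‖ < 1/lam → φ x = 0 := fun x hx =>
    hφzero x (by linarith)
  set A := ∫ x : E, φ x ^ 2 with hA
  set B := ∫ x : E, ‖fderiv ℝ φ x‖ ^ 2 with hB
  have hA0 : 0 ≤ A := integral_nonneg fun x => sq_nonneg _
  have hB0 : 0 ≤ B := integral_nonneg fun x => sq_nonneg _
  have hφc : Continuous φ := hφ.continuous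
  have hAint : Integrable (fun x : E => φ x ^ 2) :=
    by have := hsupp.comp_left (g := fun t : ℝ => t ^ 2) (by simp)
       exact (hφc.pow 2).integrable_of_hasCompactSupport this
  have hLA : (∫⁻ x : E, ENNReal.ofReal (φ x ^ 2)) = ENNReal.ofReal A :=
    (ofReal_integral_eq_lintegral_ofReal hAint
      (Filter.Eventually.of_forall fun x => sq_nonneg _)).symm
  have hmS1 : MeasurableSet {x : E | ‖x‖ < 1/lam} :=
    measurableSet_lt measurable_norm measurable_const
  have hmS2 : MeasurableSet {x : E | 1/lam < ‖x‖} :=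
    measurableSet_lt measurable_const measurable_norm
  -- term 1 vanishes
  have t1 : (∫⁻ x in {x : E | ‖x‖ < 1 / lam}, ∫⁻ y in {y : E | ‖y‖ < 1 / lam},
      ENNReal.ofReal ((φ y - φ x) ^ 2 / ‖x - y‖ ^ ((N : ℝ) + 2 * s))) = 0 := by
    rw [setLIntegral_congr_fun hmS1
      (fun x hx => ?_ : ∀ x ∈ {x : E | ‖x‖ < 1/lam}, _ = (0:ℝ≥0∞))]
    · exact lintegral_zero
    · rw [setLIntegral_congr_fun hmS1
        (fun y hy => ?_ : ∀ y ∈ {y : E | ‖y‖ < 1/lam}, _ = (0:ℝ≥0∞))]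
      · exact lintegral_zero
      · rw [hzball x hx, hzball y hy]
        simp
  -- term 2
  have t2 : (∫⁻ x in {x : E | 1 / lam < ‖x‖}, ∫⁻ y in {y : E | 1 / lam < ‖y‖},
      ENNReal.ofReal ((φ y - φ x) ^ 2 / ‖x - y‖ ^ ((N : ℝ) + 2 * r))) ≤
      ENNReal.ofReal (C2 * (A + B)) := by
    refine le_trans (le_trans (setLIntegral_le_lintegral _ _)
      (lintegral_mono fun x => setLIntegral_le_lintegral _ _)) ?_
    exact hG φ hφ hsupp
  -- term 3
  have t3 : (∫⁻ x in {x : E | ‖x‖ < 1 / lam}, ∫⁻ y in {y : E | 1 / lam < ‖y‖},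
      ENNReal.ofReal ((φ y - φ x) ^ 2 / ‖x - y‖ ^ ((N : ℝ) + 2 * c))) ≤
      ENNReal.ofReal ((2/ρ)^q * A) * (ENNReal.ofReal ((1/lam)^N) * volume (ball (0:E) 1)) := by
    have hinner : ∀ x ∈ {x : E | ‖x‖ < 1/lam},
        (∫⁻ y in {y : E | 1 / lam < ‖y‖},
          ENNReal.ofReal ((φ y - φ x) ^ 2 / ‖x - y‖ ^ ((N : ℝ) + 2 * c))) ≤
        ENNReal.ofReal ((2/ρ)^q * A) := by
      intro x hx
      have hxρ : ‖x‖ < ρ/2 := lt_trans hx hinv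
      have hφx : φ x = 0 := hzball x hx
      have hpt : ∀ y : E, ENNReal.ofReal ((φ y - φ x) ^ 2 / ‖x - y‖ ^ ((N : ℝ) + 2 * c)) ≤
          ENNReal.ofReal ((2/ρ)^q * φ y ^ 2) := by
        intro y
        rcases eq_or_ne (φ y) 0 with hy0 | hy0
        · rw [hφx, hy0]
          simp
        · have hyρ : ρ < ‖y‖ := hsuppset (Function.mem_support.2 hy0)
          have hdist : ρ/2 ≤ ‖x - y‖ := by
            have h1 : ‖y‖ - ‖x‖ ≤ ‖y - x‖ := by
              have := norm_sub_norm_le y x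
              linarith
            rw [norm_sub_rev]
            linarith
          have hden : (ρ/2)^q ≤ ‖x - y‖ ^ q :=
            Real.rpow_le_rpow (by positivity) hdist hq0.le
          apply ENNReal.ofReal_le_ofReal
          rw [hφx, sub_zero]
          calc φ y ^ 2 / ‖x - y‖ ^ q ≤ φ y ^ 2 / (ρ/2)^q :=
                div_le_div_of_nonneg_left (sq_nonneg _) (by positivity) hden
            _ = (2/ρ)^q * φ y ^ 2 := by
                rw [div_eq_mul_inv, ← Real.inv_rpow (by positivity), inv_div, mul_comm]
      calc (∫⁻ y in {y : E | 1 / lam < ‖y‖},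
            ENNReal.ofReal ((φ y - φ x) ^ 2 / ‖x - y‖ ^ ((N : ℝ) + 2 * c)))
          ≤ ∫⁻ y in {y : E | 1 / lam < ‖y‖}, ENNReal.ofReal ((2/ρ)^q * φ y ^ 2) :=
            setLIntegral_mono' hmS2 fun y _ => hpt y
        _ ≤ ∫⁻ y : E, ENNReal.ofReal ((2/ρ)^q * φ y ^ 2) := setLIntegral_le_lintegral _ _
        _ = ENNReal.ofReal ((2/ρ)^q * A) := by
            simp_rw [ENNReal.ofReal_mul (by positivity : (0:ℝ) ≤ (2/ρ)^q)]
            rw [lintegral_const_mul' _ _ ofReal_ne_top, hLA,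
              ← ENNReal.ofReal_mul (by positivity)]
    calc (∫⁻ x in {x : E | ‖x‖ < 1 / lam}, ∫⁻ y in {y : E | 1 / lam < ‖y‖},
          ENNReal.ofReal ((φ y - φ x) ^ 2 / ‖x - y‖ ^ ((N : ℝ) + 2 * c)))
        ≤ ∫⁻ _ in {x : E | ‖x‖ < 1/lam}, ENNReal.ofReal ((2/ρ)^q * A) :=
          setLIntegral_mono' hmS1 hinner
      _ = ENNReal.ofReal ((2/ρ)^q * A) * volume {x : E | ‖x‖ < 1/lam} := setLIntegral_const _ _
      _ = ENNReal.ofReal ((2/ρ)^q * A) * (ENNReal.ofReal ((1/lam)^N) * volume (ball (0:E) 1)) := by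
          congr 1
          have hset : {x : E | ‖x‖ < 1/lam} = ball (0:E) (1/lam) := by
            ext x; simp [mem_ball_zero_iff]
          rw [hset, Measure.addHaar_ball volume (0:E) (by positivity : (0:ℝ) ≤ 1/lam)]
          have hfr : Module.finrank ℝ E = N := finrank_euclideanSpace_fin
          rw [hfr]
  -- assemble
  have energy_eq : rescaledEnergy N r s c αs αr αc lam φ =
      ENNReal.ofReal (αs / 4 * lam ^ (2 * r - 2 * s)) *
        (∫⁻ x in {x : E | ‖x‖ < 1 / lam}, ∫⁻ y in {y : E | ‖y‖ < 1 / lam},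
          ENNReal.ofReal ((φ y - φ x) ^ 2 / ‖x - y‖ ^ ((N : ℝ) + 2 * s))) +
      ENNReal.ofReal (αr / 4) *
        (∫⁻ x in {x : E | 1 / lam < ‖x‖}, ∫⁻ y in {y : E | 1 / lam < ‖y‖},
          ENNReal.ofReal ((φ y - φ x) ^ 2 / ‖x - y‖ ^ ((N : ℝ) + 2 * r))) +
      ENNReal.ofReal (αc / 2 * lam ^ (2 * r - 2 * c)) *
        (∫⁻ x in {x : E | ‖x‖ < 1 / lam}, ∫⁻ y in {y : E | 1 / lam < ‖y‖},
          ENNReal.ofReal ((φ y - φ x) ^ 2 / ‖x - y‖ ^ ((N : ℝ) + 2 * c))) := by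
    rw [rescaledEnergy]
  have key : lam ^ (2*r - 2*c) * (1/lam)^N ≤ 1 := by
    have h1 : ((1/lam:ℝ))^N = lam ^ (-(N:ℝ)) := by
      rw [one_div, inv_pow, ← Real.rpow_natCast lam N, ← Real.rpow_neg hlam0.le]
    rw [h1, ← Real.rpow_add hlam0]
    apply Real.rpow_le_one_of_one_le_of_nonpos hlam1.le
    linarith
  have hvol : volume (ball (0:E) 1) = ENNReal.ofReal μB :=
    (ENNReal.ofReal_toReal measure_ball_lt_top.ne).symm
  have t3' : ENNReal.ofReal (αc / 2 * lam ^ (2*r - 2*c)) *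
      (ENNReal.ofReal ((2/ρ)^q * A) * (ENNReal.ofReal ((1/lam)^N) * volume (ball (0:E) 1)))
      ≤ ENNReal.ofReal (αc/2 * ((2/ρ)^q * μB * A)) := by
    rw [hvol, ← ENNReal.ofReal_mul (by positivity), ← ENNReal.ofReal_mul (by positivity),
      ← ENNReal.ofReal_mul (by positivity)]
    apply ENNReal.ofReal_le_ofReal
    have h := mul_le_of_le_one_right
      (show (0:ℝ) ≤ αc/2 * ((2/ρ)^q * μB * A) by positivity) key
    calc αc / 2 * lam ^ (2*r - 2*c) * ((2/ρ)^q * A * ((1/lam)^N * μB))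
        = αc/2 * ((2/ρ)^q * μB * A) * (lam ^ (2*r - 2*c) * (1/lam)^N) := by ring
      _ ≤ αc/2 * ((2/ρ)^q * μB * A) := h
  rw [energy_eq, t1, mul_zero, zero_add]
  calc ENNReal.ofReal (αr / 4) *
        (∫⁻ x in {x : E | 1 / lam < ‖x‖}, ∫⁻ y in {y : E | 1 / lam < ‖y‖},
          ENNReal.ofReal ((φ y - φ x) ^ 2 / ‖x - y‖ ^ ((N : ℝ) + 2 * r))) +
      ENNReal.ofReal (αc / 2 * lam ^ (2 * r - 2 * c)) *
        (∫⁻ x in {x : E | ‖x‖ < 1 / lam}, ∫⁻ y in {y : E | 1 / lam < ‖y‖},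
          ENNReal.ofReal ((φ y - φ x) ^ 2 / ‖x - y‖ ^ ((N : ℝ) + 2 * c)))
      ≤ ENNReal.ofReal (αr / 4) * ENNReal.ofReal (C2 * (A + B)) +
        ENNReal.ofReal (αc / 2 * lam ^ (2 * r - 2 * c)) *
        (ENNReal.ofReal ((2/ρ)^q * A) *
          (ENNReal.ofReal ((1/lam)^N) * volume (ball (0:E) 1))) :=
        add_le_add (mul_le_mul_right t2 _) (mul_le_mul_right t3 _)
    _ ≤ ENNReal.ofReal (αr / 4 * (C2 * (A + B))) +
        ENNReal.ofReal (αc/2 * ((2/ρ)^q * μB * A)) := by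
        rw [← ENNReal.ofReal_mul (by positivity)]
        exact add_le_add le_rfl t3'
    _ = ENNReal.ofReal (αr / 4 * (C2 * (A + B)) + αc/2 * ((2/ρ)^q * μB * A)) :=
        (ENNReal.ofReal_add (by positivity) (by positivity)).symm
    _ ≤ ENNReal.ofReal ((αr/4 * C2 + αc/2 * (2/ρ)^q * μB + 1) * (A + B)) := by
        apply ENNReal.ofReal_le_ofReal
        have hcoef : (0:ℝ) ≤ αc/2 * (2/ρ)^q * μB := by positivity
        nlinarith [mul_nonneg hcoef hB0, mul_nonneg hcoef hA0]
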